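/- arXiv:0901.1971 — 5 statements merged into one kernel-verified Lean document; each statement's English description precedes it below -/
import Mathlib

section
/- For every x in S_n^λ and every integer d ≥ 0, the number of y in S_n^λ with ℓ∞(x, y) ≤ d equals V_∞(λ, n, d); that is, every ball of radius d in S_n^λ under the ℓ∞ metric has the same cardinality as the ball centered at the identity permutation. -/
open Finset

/-- `Snl lam n m` : the set of sequences of length `n` with values in `Fin m`
(representing symbols `1,…,m`) in which every symbol occurs exactly `lam` times. -/
def Snl (lam n m : ℕ) : Finset (Fin n → Fin m) :=
  univ.filter fun x => ∀ v : Fin m, (univ.filter fun i => x i = v).card = lam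

/-- `ℓ∞` distance between two sequences. -/
def linf {n m : ℕ} (x y : Fin n → Fin m) : ℕ :=
  univ.sup fun i => ((x i : ℤ) - (y i : ℤ)).natAbs

/-- The identity permutation `I_n^λ`, whose `i`-th entry (1-indexed) is `⌈i/λ⌉`;
in the 0-indexed representation this is `i / λ`. -/
def idperm (lam n m : ℕ) (hm : 0 < m) : Fin n → Fin m :=
  fun i => if h : i.val / lam < m then ⟨i.val / lam, h⟩ else ⟨0, hm⟩

/-- `V_∞(λ,n,d)` : the number of elements of `S_n^λ` within `ℓ∞`-distance `d`
from the identity permutation. -/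
def Vball (lam n m d : ℕ) (hm : 0 < m) : ℕ :=
  ((Snl lam n m).filter fun y => linf (idperm lam n m hm) y ≤ d).card

private theorem div_eq_iff' (lam i v : ℕ) (hl : 0 < lam) :
    i / lam = v ↔ v * lam ≤ i ∧ i < v * lam + lam := by
  constructor
  · rintro rfl
    have hd := Nat.div_add_mod i lam
    have hm2 := Nat.mod_lt i hl
    exact ⟨Nat.div_mul_le_self i lam, by rw [mul_comm]; omega⟩
  · rintro ⟨h1, h2⟩
    exact Nat.div_eq_of_lt_le h1 (by simpa [Nat.succ_mul] using h2)

private theorem exists_perm_comp {n m : ℕ} (f g : Fin n → Fin m)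
    (h : ∀ v, Fintype.card {i // g i = v} = Fintype.card {i // f i = v}) :
    ∃ e : Equiv.Perm (Fin n), ∀ i, f (e i) = g i := by
  let e : Fin n ≃ Fin n :=
    (Equiv.sigmaFiberEquiv g).symm.trans
      ((Equiv.sigmaCongrRight fun v => Fintype.equivOfCardEq (h v)).trans
        (Equiv.sigmaFiberEquiv f))
  refine ⟨e, fun i => ?_⟩
  simp only [e, Equiv.trans_apply, Equiv.sigmaFiberEquiv, Equiv.sigmaCongrRight,
    Equiv.coe_fn_mk, Equiv.coe_fn_symm_mk]
  exact ((Fintype.equivOfCardEq (h (g i))) ⟨i, rfl⟩).2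

private theorem idperm_mem (lam m : ℕ) (hl : 0 < lam) (hm : 0 < m)
    (n : ℕ) (hn : n = m * lam) : idperm lam n m hm ∈ Snl lam n m := by
  simp only [Snl, mem_filter, mem_univ, true_and]
  intro v
  have key : ∀ i : Fin n, idperm lam n m hm i = v ↔
      v.val * lam ≤ i.val ∧ i.val < v.val * lam + lam := by
    intro i
    have hlt : i.val / lam < m := by
      rw [Nat.div_lt_iff_lt_mul hl]
      simpa [hn, mul_comm] using i.isLt
    simp only [idperm, dif_pos hlt, Fin.ext_iff]
    exact div_eq_iff' lam i.val v.val hl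
  have hcard : (univ.filter fun i => idperm lam n m hm i = v).card
      = (Finset.Ico (v.val * lam) (v.val * lam + lam)).card := by
    apply Finset.card_bij' (fun i _ => i.val)
      (fun j hj => (⟨j, by
        rw [Finset.mem_Ico] at hj
        have : v.val * lam + lam ≤ m * lam := by
          have : v.val + 1 ≤ m := v.isLt
          calc v.val * lam + lam = (v.val + 1) * lam := by ring
            _ ≤ m * lam := Nat.mul_le_mul_right lam this
        omega⟩ : Fin n))
    case hi =>
      intro i hi
      simp only [mem_filter, mem_univ, true_and] at hi
      rw [Finset.mem_Ico]
      exact (key i).mp hi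
    case hj =>
      intro j hj
      have hj' := Finset.mem_Ico.mp hj
      simp only [mem_filter, mem_univ, true_and]
      exact (key _).mpr hj'
    case left_inv => intro i _; rfl
    case right_inv => intro j _; rfl
  rw [hcard]; simp

private theorem comp_mem_Snl {lam n m : ℕ} (e : Equiv.Perm (Fin n))
    {y : Fin n → Fin m} (hy : y ∈ Snl lam n m) : (y ∘ e) ∈ Snl lam n m := by
  simp only [Snl, mem_filter, mem_univ, true_and] at hy ⊢
  intro v
  rw [← Fintype.card_subtype, ← hy v, ← Fintype.card_subtype]
  exact Fintype.card_congr (e.subtypeEquiv fun i => Iff.rfl)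

private theorem linf_comp {n m : ℕ} (e : Equiv.Perm (Fin n)) (x y : Fin n → Fin m) :
    linf (x ∘ e) (y ∘ e) = linf x y := by
  unfold linf
  conv_rhs => rw [← Finset.image_univ_equiv e, Finset.sup_image]
  rfl

/-- Every ball of radius `d` in `S_n^λ` under the `ℓ∞` metric has exactly
`V_∞(λ,n,d)` elements. -/
theorem ball_card_eq_Vball (lam m : ℕ) (hl : 0 < lam) (hm : 0 < m)
    (n : ℕ) (hn : n = m * lam)
    (x : Fin n → Fin m) (hx : x ∈ Snl lam n m) (d : ℕ) :
    ((Snl lam n m).filter fun y => linf x y ≤ d).card = Vball lam n m d hm := by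
  have hid := idperm_mem lam m hl hm n hn
  simp only [Snl, mem_filter, mem_univ, true_and] at hx hid
  have hcards : ∀ v, Fintype.card {i // idperm lam n m hm i = v} =
      Fintype.card {i // x i = v} := by
    intro v
    rw [Fintype.card_subtype, Fintype.card_subtype, hx v, hid v]
  obtain ⟨e, he⟩ := exists_perm_comp x (idperm lam n m hm) hcards
  have hxe : x ∘ e = idperm lam n m hm := funext he
  unfold Vball
  apply Finset.card_bij' (fun y _ => y ∘ e) (fun y _ => y ∘ e.symm)
  · intro y hy
    simp only [mem_filter] at hy ⊢
    refine ⟨comp_mem_Snl e hy.1, ?_⟩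
    rw [← hxe, linf_comp e x y]
    exact hy.2
  · intro y hy
    simp only [mem_filter] at hy ⊢
    refine ⟨comp_mem_Snl e.symm hy.1, ?_⟩
    have : linf x (y ∘ e.symm) = linf (x ∘ e) ((y ∘ e.symm) ∘ e) := (linf_comp e x _).symm
    rw [this, hxe]
    have : (y ∘ e.symm) ∘ e = y := by funext i; simp
    rw [this]
    exact hy.2
  · intro y _; funext i; simp
  · intro y _; funext i; simp
end

section
/- For every integer d ≥ 1, F_∞(λ, n, d) ≤ |S_n^λ| / V_∞(λ, n, ⌊(d−1)/2⌋). -/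
open Finset

/-- `F_∞(λ,n,d)` : the largest cardinality of a subset of `S_n^λ` whose distinct
elements are pairwise at `ℓ∞`-distance at least `d` (a `(λ,n,d)`-FPA). -/
noncomputable def Fmax (lam n m d : ℕ) : ℕ :=
  sSup {c : ℕ | ∃ C : Finset (Fin n → Fin m),
    C ⊆ Snl lam n m ∧ (∀ x ∈ C, ∀ y ∈ C, x ≠ y → d ≤ linf x y) ∧ C.card = c}

/-! Sphere packing. Permuting positions preserves `S_n^λ` and `ℓ∞`, and any two elements of
`S_n^λ` differ by such a permutation, so every `ℓ∞`-ball of radius `r` in `S_n^λ` has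
`V_∞(λ,n,r)` elements. Distinct codewords of an FPA are at distance at least `max d 1`, which
exceeds `2r` for `r = ⌊(d-1)/2⌋`; by the triangle inequality the balls of radius `r` around the
codewords are then pairwise disjoint, so they pack into `S_n^λ`. -/

theorem card_mul_le_card_of_separated {α : Type*} [DecidableEq α] (dist : α → α → ℕ)
    (dist_comm : ∀ x y, dist x y = dist y x)
    (dist_triangle : ∀ x y z, dist x z ≤ dist x y + dist y z) {S C : Finset α} {r V : ℕ}
    (hC : ∀ x ∈ C, ∀ y ∈ C, x ≠ y → 2 * r < dist x y)
    (hV : ∀ x ∈ C, #{y ∈ S | dist x y ≤ r} = V) : #C * V ≤ #S := by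
  have hdisj : (C : Set α).PairwiseDisjoint fun x => {y ∈ S | dist x y ≤ r} := by
    intro x hx x' hx' hxx'
    refine disjoint_left.2 fun z hz hz' => ?_
    rw [mem_filter] at hz hz'
    have := dist_triangle x z x'
    have := dist_comm x' z
    have := hC x hx x' hx' hxx'
    omega
  calc #C * V = ∑ x ∈ C, #{y ∈ S | dist x y ≤ r} := by
        rw [sum_congr rfl hV, sum_const, smul_eq_mul]
    _ = #(C.biUnion fun x => {y ∈ S | dist x y ≤ r}) := (card_biUnion hdisj).symm
    _ ≤ #S := card_le_card (biUnion_subset.2 fun _ _ => filter_subset _ _)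

theorem exists_perm_comp_eq_of_card_fiber_eq {ι β : Type*} [Fintype ι] [DecidableEq β]
    {x y : ι → β} (h : ∀ v, #{i | x i = v} = #{i | y i = v}) :
    ∃ σ : Equiv.Perm ι, x ∘ σ = y :=
  ⟨Equiv.ofFiberEquiv fun v => Fintype.equivOfCardEq <| by simp only [Fintype.card_subtype, h],
    funext <| Equiv.ofFiberEquiv_map _⟩

section Linf

variable {n m : ℕ}

theorem linf_le_iff {x y : Fin n → Fin m} {d : ℕ} :
    linf x y ≤ d ↔ ∀ i, ((x i : ℤ) - y i).natAbs ≤ d :=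
  Finset.sup_le_iff.trans <| by simp

theorem natAbs_sub_le_linf (x y : Fin n → Fin m) (i : Fin n) :
    ((x i : ℤ) - y i).natAbs ≤ linf x y :=
  le_sup (f := fun i => ((x i : ℤ) - y i).natAbs) (mem_univ i)

theorem linf_comm (x y : Fin n → Fin m) : linf x y = linf y x := by
  unfold linf
  congr 1
  funext i
  omega

theorem linf_triangle (x y z : Fin n → Fin m) : linf x z ≤ linf x y + linf y z :=
  linf_le_iff.2 fun i => by
    have := natAbs_sub_le_linf x y i
    have := natAbs_sub_le_linf y z i
    omega

theorem linf_pos_of_ne {x y : Fin n → Fin m} (h : x ≠ y) : 0 < linf x y := by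
  obtain ⟨i, hi⟩ := Function.ne_iff.1 h
  have := natAbs_sub_le_linf x y i
  have : (x i : ℕ) ≠ y i := Fin.val_ne_of_ne hi
  omega

theorem linf_self (x : Fin n → Fin m) : linf x x = 0 := by
  simp [linf]

theorem linf_comp_perm (x y : Fin n → Fin m) (σ : Equiv.Perm (Fin n)) :
    linf (x ∘ σ) (y ∘ σ) = linf x y := by
  conv_rhs => rw [linf, ← Finset.map_univ_equiv σ, Finset.sup_map]
  rfl

end Linf

section Snl

variable {lam n m : ℕ}

theorem comp_perm_mem_Snl_iff {x : Fin n → Fin m} (σ : Equiv.Perm (Fin n)) :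
    x ∘ σ ∈ Snl lam n m ↔ x ∈ Snl lam n m := by
  have (v : Fin m) : #{i | (x ∘ σ) i = v} = #{i | x i = v} :=
    card_equiv σ (by simp)
  simp only [Snl, mem_filter, mem_univ, true_and, this]

theorem exists_perm_comp_eq_of_mem_Snl {x y : Fin n → Fin m} (hx : x ∈ Snl lam n m)
    (hy : y ∈ Snl lam n m) : ∃ σ : Equiv.Perm (Fin n), x ∘ σ = y := by
  simp only [Snl, mem_filter, mem_univ, true_and] at hx hy
  exact exists_perm_comp_eq_of_card_fiber_eq fun v => (hx v).trans (hy v).symm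

theorem card_ball_eq_of_mem_Snl {x y : Fin n → Fin m} (hx : x ∈ Snl lam n m)
    (hy : y ∈ Snl lam n m) (r : ℕ) :
    #{z ∈ Snl lam n m | linf x z ≤ r} = #{z ∈ Snl lam n m | linf y z ≤ r} := by
  obtain ⟨σ, rfl⟩ := exists_perm_comp_eq_of_mem_Snl hx hy
  refine card_equiv (Equiv.arrowCongr σ.symm (Equiv.refl _)) fun z => ?_
  have hz : Equiv.arrowCongr σ.symm (Equiv.refl _) z = z ∘ σ := by ext; simp
  simp only [mem_filter, hz, comp_perm_mem_Snl_iff, linf_comp_perm]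

theorem idperm_mem_Snl (hm : 0 < m) (hn : n = m * lam) : idperm lam n m hm ∈ Snl lam n m := by
  subst hn
  have hdiv (i : Fin (m * lam)) : idperm lam (m * lam) m hm i = (finProdFinEquiv.symm i).1 := by
    rw [idperm, dif_pos (show (i : ℕ) / lam < m from i.divNat.isLt)]
    rfl
  simp only [Snl, mem_filter, mem_univ, true_and, hdiv]
  intro v
  rw [card_equiv finProdFinEquiv.symm (t := {p | p.1 = v}) (by simp), ← univ_product_univ, filter_product_left (· = v)]
  simp [filter_eq']

theorem card_ball_eq_Vball (hm : 0 < m) (hn : n = m * lam) {x : Fin n → Fin m}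
    (hx : x ∈ Snl lam n m) (r : ℕ) : #{z ∈ Snl lam n m | linf x z ≤ r} = Vball lam n m r hm :=
  card_ball_eq_of_mem_Snl hx (idperm_mem_Snl hm hn) r

theorem Vball_pos (hm : 0 < m) (hn : n = m * lam) (r : ℕ) : 0 < Vball lam n m r hm :=
  card_pos.2 ⟨idperm lam n m hm,
    mem_filter.2 ⟨idperm_mem_Snl hm hn, (linf_self _).trans_le r.zero_le⟩⟩

end Snl

theorem exists_card_eq_Fmax (lam n m d : ℕ) :
    ∃ C ⊆ Snl lam n m, (∀ x ∈ C, ∀ y ∈ C, x ≠ y → d ≤ linf x y) ∧ #C = Fmax lam n m d := by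
  have hbdd : BddAbove {c | ∃ C : Finset (Fin n → Fin m),
      C ⊆ Snl lam n m ∧ (∀ x ∈ C, ∀ y ∈ C, x ≠ y → d ≤ linf x y) ∧ #C = c} := by
    refine ⟨#(Snl lam n m), ?_⟩
    rintro _ ⟨C, hC, -, rfl⟩
    exact card_le_card hC
  refine Nat.sSup_mem ?_ hbdd
  exact ⟨0, ∅, empty_subset _, by simp⟩

theorem Fmax_upper_bound_general (lam m : ℕ) (hm : 0 < m)
    (n : ℕ) (hn : n = m * lam) (d : ℕ) :
    (Fmax lam n m d : ℝ)
      ≤ ((Snl lam n m).card : ℝ) / (Vball lam n m ((d - 1) / 2) hm : ℝ) := by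
  obtain ⟨C, hCS, hC, hCcard⟩ := exists_card_eq_Fmax lam n m d
  have hpack : #C * Vball lam n m ((d - 1) / 2) hm ≤ #(Snl lam n m) :=
    card_mul_le_card_of_separated linf linf_comm linf_triangle
      (fun x hx y hy hxy => by
        have := hC x hx y hy hxy
        have := linf_pos_of_ne hxy
        omega)
      fun x hx => card_ball_eq_Vball hm hn (hCS hx) _
  rw [← hCcard, le_div_iff₀ (by exact_mod_cast Vball_pos hm hn _)]
  exact_mod_cast hpack

/-- Sphere-packing upper bound: `F_∞(λ,n,d) ≤ |S_n^λ| / V_∞(λ,n,⌊(d−1)/2⌋)`. -/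
theorem Fmax_upper_bound (lam m : ℕ) (hl : 0 < lam) (hm : 0 < m)
    (n : ℕ) (hn : n = m * lam) (d : ℕ) (hd : 1 ≤ d) :
    (Fmax lam n m d : ℝ)
      ≤ ((Snl lam n m).card : ℝ) / (Vball lam n m ((d - 1) / 2) hm : ℝ) :=
  Fmax_upper_bound_general lam m hm n hn d
end

section
/- For every integer d ≥ 1 with m ≥ 2⌊(d−1)/2⌋ + 1, F_∞(λ, n, d) ≤ 2^{2λ⌊(d−1)/2⌋} · n^n / (2λ⌊(d−1)/2⌋ + λ)^n. -/
open Finset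

/-- window size function: `wf m r j` is the number of symbols in `{0,…,m-1}`
within distance `r` of `j`. -/
def wf (m r j : ℕ) : ℕ := ((range m).filter fun t : ℕ => ((j : ℤ) - (t:ℤ)).natAbs ≤ r).card

lemma wf_eq (m r j : ℕ) : wf m r j = min m (j+r+1) - (j - r) := by
  unfold wf
  rw [show ((range m).filter fun t : ℕ => ((j : ℤ) - (t:ℤ)).natAbs ≤ r)
      = Ico (j - r) (min m (j+r+1)) by
    ext t; simp [mem_filter, mem_range, mem_Ico]; omega]
  rw [Nat.card_Ico]

lemma wf_ge_interior (m r j : ℕ) (h1 : r ≤ j) (h2 : j + r + 1 ≤ m) :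
    2*r+1 ≤ wf m r j := by rw [wf_eq]; omega

lemma wf_ge (m r j : ℕ) (hj : j < m) (hs : 2*r+1 ≤ m) : r + 1 ≤ wf m r j := by
  rw [wf_eq]; omega

lemma key_prod (m r : ℕ) (hs : 2*r+1 ≤ m) :
    (2*r+1)^m ≤ 2^(2*r) * ∏ j ∈ range m, wf m r j := by
  have h1 : ∀ j ∈ range m, (2*r+1) ≤ (if j < r ∨ m ≤ j + r then 2 else 1) * wf m r j := by
    intro j hj
    rw [mem_range] at hj
    by_cases hb : j < r ∨ m ≤ j + r
    · rw [if_pos hb]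
      have := wf_ge m r j hj hs
      omega
    · rw [if_neg hb, one_mul]
      push_neg at hb
      exact wf_ge_interior m r j (by omega) (by omega)
  calc (2*r+1)^m = ∏ _j ∈ range m, (2*r+1) := by rw [prod_const, card_range]
    _ ≤ ∏ j ∈ range m, ((if j < r ∨ m ≤ j + r then 2 else 1) * wf m r j) :=
        Finset.prod_le_prod (fun i _ => Nat.zero_le _) h1
    _ = (∏ j ∈ range m, (if j < r ∨ m ≤ j + r then 2 else 1)) * ∏ j ∈ range m, wf m r j :=
        Finset.prod_mul_distrib
    _ = 2^(2*r) * ∏ j ∈ range m, wf m r j := by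
        rw [Finset.prod_ite, Finset.prod_const, Finset.prod_const, one_pow, mul_one]
        congr 1
        congr 1
        rw [show ((range m).filter fun j : ℕ => j < r ∨ m ≤ j + r) = range r ∪ Ico (m-r) m by
          ext t; simp [mem_range, mem_Ico]; omega]
        rw [Finset.card_union_of_disjoint, card_range, Nat.card_Ico]
        · omega
        · rw [Finset.disjoint_left]; intro a ha hb; simp [mem_range, mem_Ico] at ha hb; omega

lemma count_lemma (lam m n r d : ℕ) (hn0 : 0 < n) (hdr : 2*r < d)
    (C : Finset (Fin n → Fin m)) (hC : C ⊆ Snl lam n m)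
    (hdist : ∀ x ∈ C, ∀ y ∈ C, x ≠ y → d ≤ linf x y) :
    C.card * (∏ j ∈ range m, wf m r j)^lam ≤ m ^ n := by
  haveI : NeZero n := ⟨hn0.ne'⟩
  set B : (Fin n → Fin m) → Finset (Fin n → Fin m) :=
    fun x => Fintype.piFinset fun i => univ.filter fun c : Fin m => ((x i : ℤ) - (c : ℤ)).natAbs ≤ r
    with hB
  have hmem : ∀ x z, z ∈ B x ↔ ∀ i, ((x i : ℤ) - (z i : ℤ)).natAbs ≤ r := by
    intro x z
    simp [hB, Fintype.mem_piFinset]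
  have hdisj : ∀ x ∈ C, ∀ y ∈ C, x ≠ y → Disjoint (B x) (B y) := by
    intro x hx y hy hxy
    rw [Finset.disjoint_left]
    intro z hzx hzy
    rw [hmem] at hzx hzy
    have hd := hdist x hx y hy hxy
    unfold linf at hd
    obtain ⟨i, _, hi⟩ := Finset.exists_mem_eq_sup (univ : Finset (Fin n))
      univ_nonempty (fun i => ((x i : ℤ) - (y i : ℤ)).natAbs)
    rw [hi] at hd
    have h1 := hzx i
    have h2 := hzy i
    omega
  have hcard : ∀ x ∈ C, (B x).card = (∏ j ∈ range m, wf m r j)^lam := by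
    intro x hx
    have hx' : ∀ v : Fin m, (univ.filter fun i => x i = v).card = lam :=
      (mem_filter.mp (hC hx)).2
    rw [hB]
    rw [Fintype.card_piFinset]
    have hone : ∀ i : Fin n,
        (univ.filter fun c : Fin m => ((x i : ℤ) - (c : ℤ)).natAbs ≤ r).card
          = wf m r (x i).val := by
      intro i
      unfold wf
      rw [Finset.card_filter, Finset.card_filter]
      exact Fin.sum_univ_eq_sum_range
        (fun j : ℕ => if (((x i : ℕ) : ℤ) - (j:ℤ)).natAbs ≤ r then 1 else 0) m
    calc ∏ i, (univ.filter fun c : Fin m => ((x i : ℤ) - (c : ℤ)).natAbs ≤ r).card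
        = ∏ i, wf m r (x i).val := Finset.prod_congr rfl fun i _ => hone i
      _ = ∏ v : Fin m, ∏ i ∈ univ.filter fun i => x i = v, wf m r (x i).val :=
          (Finset.prod_fiberwise_of_maps_to (fun i _ => mem_univ (x i)) _).symm
      _ = ∏ v : Fin m, wf m r v.val ^ lam := by
          refine Finset.prod_congr rfl fun v _ => ?_
          rw [show (∏ i ∈ univ.filter fun i => x i = v, wf m r (x i).val)
              = ∏ i ∈ univ.filter fun i => x i = v, wf m r v.val from
            Finset.prod_congr rfl fun i hi => by rw [(mem_filter.mp hi).2]]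
          rw [Finset.prod_const, hx' v]
      _ = (∏ v : Fin m, wf m r v.val) ^ lam := by rw [Finset.prod_pow]
      _ = (∏ j ∈ range m, wf m r j)^lam := by rw [Fin.prod_univ_eq_prod_range]
  calc C.card * (∏ j ∈ range m, wf m r j)^lam
      = ∑ x ∈ C, (B x).card := by
        rw [Finset.sum_congr rfl hcard, Finset.sum_const, smul_eq_mul]
    _ = (C.biUnion B).card := (Finset.card_biUnion hdisj).symm
    _ ≤ Fintype.card (Fin n → Fin m) := Finset.card_le_univ _
    _ = m ^ n := by simp

/-- Asymptotic upper bound: if `m ≥ 2⌊(d−1)/2⌋ + 1` then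
`F_∞(λ,n,d) ≤ 2^{2λ⌊(d−1)/2⌋} · n^n / (2λ⌊(d−1)/2⌋ + λ)^n`. -/
theorem Fmax_asymptotic_upper_bound (lam m : ℕ) (hl : 0 < lam) (hm : 0 < m)
    (n : ℕ) (hn : n = m * lam) (d : ℕ) (hd : 1 ≤ d)
    (hmd : 2 * ((d - 1) / 2) + 1 ≤ m) :
    (Fmax lam n m d : ℝ)
      ≤ 2 ^ (2 * lam * ((d - 1) / 2)) * (n : ℝ) ^ n
          / ((2 * lam * ((d - 1) / 2) + lam : ℕ) : ℝ) ^ n := by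
  set r := (d - 1) / 2 with hr
  have hn0 : 0 < n := hn ▸ Nat.mul_pos hm hl
  have hdr : 2 * r < d := by omega
  -- the sup is attained
  have hne : {c : ℕ | ∃ C : Finset (Fin n → Fin m),
      C ⊆ Snl lam n m ∧ (∀ x ∈ C, ∀ y ∈ C, x ≠ y → d ≤ linf x y) ∧ C.card = c}.Nonempty := by
    exact ⟨0, ∅, by simp⟩
  have hbdd : BddAbove {c : ℕ | ∃ C : Finset (Fin n → Fin m),
      C ⊆ Snl lam n m ∧ (∀ x ∈ C, ∀ y ∈ C, x ≠ y → d ≤ linf x y) ∧ C.card = c} := by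
    refine ⟨Fintype.card (Fin n → Fin m), ?_⟩
    rintro c ⟨C, _, _, rfl⟩
    exact Finset.card_le_univ C
  obtain ⟨C, hC1, hC2, hC3⟩ := Nat.sSup_mem hne hbdd
  have hF : Fmax lam n m d = C.card := hC3.symm
  -- key natural-number inequality
  have h1 : C.card * (∏ j ∈ range m, wf m r j)^lam ≤ m ^ n :=
    count_lemma lam m n r d hn0 hdr C hC1 hC2
  have h2 : (2*r+1)^m ≤ 2^(2*r) * ∏ j ∈ range m, wf m r j := key_prod m r hmd
  set K := ∏ j ∈ range m, wf m r j with hK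
  have e1 : (2 * lam * r + lam) = (2*r+1) * lam := by ring
  have e2 : (2*r+1)^n = ((2*r+1)^m)^lam := by rw [hn, pow_mul]
  have e3 : (2^(2*r) * K)^lam = 2^(2*r*lam) * K^lam := by rw [mul_pow, ← pow_mul]
  have e4 : m^n * lam^n = n^n := by
    conv_rhs => rw [hn]
    rw [mul_pow, ← hn]
  have hkey : Fmax lam n m d * (2 * lam * r + lam)^n ≤ 2 ^ (2 * lam * r) * n ^ n := by
    calc Fmax lam n m d * (2 * lam * r + lam)^n
        = C.card * (((2*r+1)^m)^lam * lam^n) := by rw [hF, e1, mul_pow, e2]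
      _ ≤ C.card * ((2^(2*r) * K)^lam * lam^n) :=
          Nat.mul_le_mul_left _ (Nat.mul_le_mul_right _ (Nat.pow_le_pow_left h2 lam))
      _ = 2^(2*r*lam) * (C.card * K^lam) * lam^n := by rw [e3]; ring
      _ ≤ 2^(2*r*lam) * m^n * lam^n :=
          Nat.mul_le_mul_right _ (Nat.mul_le_mul_left _ h1)
      _ = 2 ^ (2 * lam * r) * n ^ n := by
          rw [mul_assoc, e4, show 2*r*lam = 2*lam*r from by ring]
  -- transfer to ℝ
  have hpos : (0:ℝ) < ((2 * lam * r + lam : ℕ) : ℝ) ^ n := by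
    have : 0 < 2 * lam * r + lam := by omega
    positivity
  rw [le_div_iff₀ hpos]
  calc ((Fmax lam n m d : ℝ)) * ((2 * lam * r + lam : ℕ) : ℝ) ^ n
      = ((Fmax lam n m d * (2 * lam * r + lam)^n : ℕ) : ℝ) := by push_cast; ring
    _ ≤ ((2 ^ (2 * lam * r) * n ^ n : ℕ) : ℝ) := Nat.cast_le.mpr hkey
    _ = 2 ^ (2 * lam * r) * (n : ℝ) ^ n := by push_cast; ring
end

section
/- For every message m ∈ {0,1}^k, the codeword E_{n,k}^λ(m) lies in S_n^λ; that is, each symbol v ∈ {1,…,m} occurs exactly λ times among its entries. -/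
open Finset

/-- Ceiling division: `cdiv a b = ⌈a/b⌉` for natural numbers (with `b > 0`). -/
def cdiv (a b : ℕ) : ℕ := (a + b - 1) / b

/-- `ones msg i` : number of indices `j < i` (0-indexed) with `msg j = 1`. -/
def ones {k : ℕ} (msg : Fin k → Bool) (i : ℕ) : ℕ :=
  (univ.filter fun j : Fin k => j.val < i ∧ msg j = true).card

/-- `zeros msg i` : number of indices `j < i` (0-indexed) with `msg j = 0`. -/
def zeros {k : ℕ} (msg : Fin k → Bool) (i : ℕ) : ℕ :=
  (univ.filter fun j : Fin k => j.val < i ∧ msg j = false).card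

/-- The encoding map `E_{n,k}^λ`.  The `i`-th entry (0-indexed `i`, so 1-indexed
position `i+1`) of the codeword of `msg` is `⌈(n − o_i)/λ⌉` if `msg i = 1`,
`⌈(1 + z_i)/λ⌉` if `msg i = 0` (where `o_i`, `z_i` count ones resp. zeros among
the earlier message bits), and `⌈((i+1) − o)/λ⌉` for positions past `k`, where
`o` is the total number of ones in `msg`. -/
def enc (n k lam : ℕ) (msg : Fin k → Bool) : Fin n → ℕ :=
  fun i =>
    if h : i.val < k then
      if msg ⟨i.val, h⟩ = true then cdiv (n - ones msg i.val) lam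
      else cdiv (1 + zeros msg i.val) lam
    else cdiv (i.val + 1 - ones msg k) lam

/-- `ℓ∞` distance between two sequences of naturals. -/
def linfN {n : ℕ} (x y : Fin n → ℕ) : ℕ :=
  univ.sup fun i => ((x i : ℤ) - (y i : ℤ)).natAbs

/-- Membership in `S_n^λ` : all entries lie in `{1,…,m}` and each symbol
`v ∈ {1,…,m}` occurs exactly `λ` times. -/
def memSnl (n m lam : ℕ) (x : Fin n → ℕ) : Prop :=
  (∀ i, x i ∈ Finset.Icc 1 m) ∧
  ∀ v ∈ Finset.Icc 1 m, (univ.filter fun i => x i = v).card = lam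

/-- The "rank" of position `i` : a bijection `Fin n → {1,…,n}`. -/
def rk (n k : ℕ) (msg : Fin k → Bool) (i : Fin n) : ℕ :=
  if h : i.val < k then
    if msg ⟨i.val, h⟩ = true then n - ones msg i.val else 1 + zeros msg i.val
  else i.val + 1 - ones msg k

lemma ones_le_k {k : ℕ} (msg : Fin k → Bool) (i : ℕ) : ones msg i ≤ k := by
  classical
  calc (univ.filter fun j : Fin k => j.val < i ∧ msg j = true).card
      ≤ (univ : Finset (Fin k)).card := card_filter_le _ _
    _ = k := by simp

lemma zeros_le_k {k : ℕ} (msg : Fin k → Bool) (i : ℕ) : zeros msg i ≤ k := by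
  classical
  calc (univ.filter fun j : Fin k => j.val < i ∧ msg j = false).card
      ≤ (univ : Finset (Fin k)).card := card_filter_le _ _
    _ = k := by simp

lemma ones_lt {k : ℕ} (msg : Fin k → Bool) {i j : ℕ} (hi : i < k) (hij : i < j)
    (hm : msg ⟨i, hi⟩ = true) : ones msg i < ones msg j := by
  classical
  apply card_lt_card
  constructor
  · intro a ha
    simp only [mem_filter, mem_univ, true_and] at *
    exact ⟨ha.1.trans hij, ha.2⟩
  · intro hsub
    have : (⟨i, hi⟩ : Fin k) ∈ univ.filter fun j' : Fin k => j'.val < j ∧ msg j' = true := by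
      simp [hij, hm]
    have := hsub this
    simp at this

lemma zeros_lt {k : ℕ} (msg : Fin k → Bool) {i j : ℕ} (hi : i < k) (hij : i < j)
    (hm : msg ⟨i, hi⟩ = false) : zeros msg i < zeros msg j := by
  classical
  apply card_lt_card
  constructor
  · intro a ha
    simp only [mem_filter, mem_univ, true_and] at *
    exact ⟨ha.1.trans hij, ha.2⟩
  · intro hsub
    have : (⟨i, hi⟩ : Fin k) ∈ univ.filter fun j' : Fin k => j'.val < j ∧ msg j' = false := by
      simp [hij, hm]
    have := hsub this
    simp at this

lemma card_filter_lt {k : ℕ} (i : ℕ) (hik : i ≤ k) :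
    ((univ : Finset (Fin k)).filter fun j => j.val < i).card = i := by
  classical
  rw [← Finset.card_range i]
  apply Finset.card_bij (fun j _ => j.val)
  · intro a ha
    simp only [mem_filter] at ha
    simpa using ha.2
  · intro a _ b _ h
    exact Fin.ext h
  · intro b hb
    simp only [mem_range] at hb
    exact ⟨⟨b, lt_of_lt_of_le hb hik⟩, by simp [hb], rfl⟩

lemma ones_add_zeros {k : ℕ} (msg : Fin k → Bool) (i : ℕ) (hik : i ≤ k) :
    ones msg i + zeros msg i = i := by
  classical
  have h := Finset.card_filter_add_card_filter_not
    (s := (univ : Finset (Fin k)).filter fun j => j.val < i) (p := fun j => msg j = true)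
  rw [filter_filter, filter_filter] at h
  have h1 : ones msg i = ((univ : Finset (Fin k)).filter fun j => j.val < i ∧ msg j = true).card := rfl
  have h2 : zeros msg i = ((univ : Finset (Fin k)).filter fun j => j.val < i ∧ msg j = false).card := rfl
  rw [h1, h2]
  have h3 : ((univ : Finset (Fin k)).filter fun j => j.val < i ∧ ¬ msg j = true)
      = (univ : Finset (Fin k)).filter fun j => j.val < i ∧ msg j = false := by
    apply filter_congr; intro x _; simp
  rw [h3] at h
  rw [card_filter_lt i hik] at h
  exact h

lemma rk_bounds (n k : ℕ) (msg : Fin k → Bool) (hkn : k ≤ n) (i : Fin n) :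
    1 ≤ rk n k msg i ∧ rk n k msg i ≤ n := by
  have hoz := ones_add_zeros msg k le_rfl
  have hin := i.isLt
  unfold rk
  split_ifs with h1 h2
  · have := ones_lt msg h1 h1 h2
    have := ones_le_k msg k
    omega
  · have hlt : zeros msg i.val < zeros msg k := by
      apply zeros_lt msg h1 h1
      simpa using h2
    omega
  · have := ones_le_k msg k
    omega

lemma rk_of_one {n k : ℕ} {msg : Fin k → Bool} {i : Fin n} (h1 : i.val < k)
    (hm : msg ⟨i.val, h1⟩ = true) : rk n k msg i = n - ones msg i.val := by
  simp [rk, h1, hm]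

lemma rk_of_zero {n k : ℕ} {msg : Fin k → Bool} {i : Fin n} (h1 : i.val < k)
    (hm : msg ⟨i.val, h1⟩ = false) : rk n k msg i = 1 + zeros msg i.val := by
  simp [rk, h1, hm]

lemma rk_of_tail {n k : ℕ} {msg : Fin k → Bool} {i : Fin n} (h1 : ¬ i.val < k) :
    rk n k msg i = i.val + 1 - ones msg k := by
  simp [rk, h1]

lemma rk_inj (n k : ℕ) (msg : Fin k → Bool) (hkn : k ≤ n) :
    Function.Injective (rk n k msg) := by
  intro i j h
  have hoz := ones_add_zeros msg k le_rfl
  have hok := ones_le_k msg k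
  have hin := i.isLt
  have hjn := j.isLt
  by_cases h1 : i.val < k
  · by_cases h3 : j.val < k
    · cases hmi : msg ⟨i.val, h1⟩ <;> cases hmj : msg ⟨j.val, h3⟩
      · -- zero, zero
        rw [rk_of_zero h1 hmi, rk_of_zero h3 hmj] at h
        rcases lt_trichotomy i.val j.val with hc | hc | hc
        · have := zeros_lt msg h1 hc hmi; omega
        · exact Fin.ext hc
        · have := zeros_lt msg h3 hc hmj; omega
      · -- zero, one
        rw [rk_of_zero h1 hmi, rk_of_one h3 hmj] at h
        have := zeros_lt msg h1 h1 hmi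
        have := ones_lt msg h3 h3 hmj
        omega
      · -- one, zero
        rw [rk_of_one h1 hmi, rk_of_zero h3 hmj] at h
        have := ones_lt msg h1 h1 hmi
        have := zeros_lt msg h3 h3 hmj
        omega
      · -- one, one
        rw [rk_of_one h1 hmi, rk_of_one h3 hmj] at h
        rcases lt_trichotomy i.val j.val with hc | hc | hc
        · have := ones_lt msg h1 hc hmi
          have := ones_le_k msg j.val
          omega
        · exact Fin.ext hc
        · have := ones_lt msg h3 hc hmj
          have := ones_le_k msg i.val
          omega
    · rw [rk_of_tail h3] at h
      cases hmi : msg ⟨i.val, h1⟩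
      · rw [rk_of_zero h1 hmi] at h
        have := zeros_lt msg h1 h1 hmi
        omega
      · rw [rk_of_one h1 hmi] at h
        have := ones_lt msg h1 h1 hmi
        omega
  · rw [rk_of_tail h1] at h
    by_cases h3 : j.val < k
    · cases hmj : msg ⟨j.val, h3⟩
      · rw [rk_of_zero h3 hmj] at h
        have := zeros_lt msg h3 h3 hmj
        omega
      · rw [rk_of_one h3 hmj] at h
        have := ones_lt msg h3 h3 hmj
        omega
    · rw [rk_of_tail h3] at h
      exact Fin.ext (by omega)

lemma cdiv_eq_iff {lam v r : ℕ} (hl : 0 < lam) (hr : 1 ≤ r) (hv : 1 ≤ v) :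
    cdiv r lam = v ↔ (v-1)*lam + 1 ≤ r ∧ r ≤ v*lam := by
  have h1 : cdiv r lam = (r-1)/lam + 1 := by
    unfold cdiv
    have e : r + lam - 1 = (r-1) + lam := by omega
    rw [e, Nat.add_div_right _ hl]
  have e1 : (v-1) ≤ (r-1)/lam ↔ (v-1)*lam ≤ r-1 := Nat.le_div_iff_mul_le hl
  have e2 : (r-1)/lam < v ↔ r-1 < v*lam := Nat.div_lt_iff_lt_mul hl
  rw [h1]
  omega

lemma cdiv_mem {lam m r : ℕ} (hl : 0 < lam) (hr : 1 ≤ r) (hrn : r ≤ m * lam) :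
    cdiv r lam ∈ Finset.Icc 1 m := by
  have h1 : cdiv r lam = (r-1)/lam + 1 := by
    unfold cdiv
    have e : r + lam - 1 = (r-1) + lam := by omega
    rw [e, Nat.add_div_right _ hl]
  have e2 : (r-1)/lam < m := (Nat.div_lt_iff_lt_mul hl).mpr (by omega)
  rw [mem_Icc, h1]
  exact ⟨Nat.le_add_left 1 _, e2⟩

theorem enc_mem_Snl' (lam m k : ℕ) (hl : 0 < lam) (hm : 0 < m) (hk : 0 < k)
    (n : ℕ) (hn : n = m * lam) (hkn : k + lam ≤ n) (msg : Fin k → Bool) :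
    (∀ i, enc n k lam msg i ∈ Finset.Icc 1 m) ∧
    ∀ v ∈ Finset.Icc 1 m, (univ.filter fun i => enc n k lam msg i = v).card = lam := by
  classical
  have hkn' : k ≤ n := by omega
  have henc : ∀ i : Fin n, enc n k lam msg i = cdiv (rk n k msg i) lam := by
    intro i
    by_cases h1 : i.val < k
    · by_cases h2 : msg ⟨i.val, h1⟩ = true
      · rw [rk_of_one h1 h2]; simp [enc, h1, h2]
      · rw [rk_of_zero h1 (by simpa using h2)]; simp [enc, h1, h2]
    · rw [rk_of_tail h1]; simp [enc, h1]
  constructor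
  · intro i
    rw [henc i]
    have hb := rk_bounds n k msg hkn' i
    exact cdiv_mem hl hb.1 (by omega)
  · intro v hv
    rw [mem_Icc] at hv
    have hinj := rk_inj n k msg hkn'
    have himg : (univ : Finset (Fin n)).image (rk n k msg) = Finset.Icc 1 n := by
      apply Finset.eq_of_subset_of_card_le
      · intro r hr
        simp only [mem_image] at hr
        obtain ⟨i, _, rfl⟩ := hr
        have := rk_bounds n k msg hkn' i
        rw [mem_Icc]
        exact this
      · rw [Nat.card_Icc, card_image_of_injective _ hinj, card_univ, Fintype.card_fin]
        omega
    have key : (univ.filter fun i => enc n k lam msg i = v)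
        = univ.filter fun i => cdiv (rk n k msg i) lam = v := by
      apply filter_congr; intro i _
      rw [henc i]
    rw [key]
    have h4 : ((univ.filter fun i => cdiv (rk n k msg i) lam = v).image (rk n k msg)).card
        = (univ.filter fun i => cdiv (rk n k msg i) lam = v).card :=
      card_image_of_injective _ hinj
    rw [← h4]
    have h5 : (univ.filter fun i : Fin n => cdiv (rk n k msg i) lam = v).image (rk n k msg)
        = (Finset.Icc 1 n).filter fun r => cdiv r lam = v := by
      rw [← himg, Finset.filter_image]
    rw [h5]
    have h6 : (Finset.Icc 1 n).filter (fun r => cdiv r lam = v)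
        = Finset.Icc ((v-1)*lam + 1) (v*lam) := by
      ext r
      simp only [mem_filter, mem_Icc]
      constructor
      · rintro ⟨⟨hr1, hrn⟩, hc⟩
        exact (cdiv_eq_iff hl hr1 hv.1).mp hc
      · rintro ⟨ha, hb⟩
        have hr1 : 1 ≤ r := by omega
        have hvm : v*lam ≤ m*lam := Nat.mul_le_mul_right _ hv.2
        exact ⟨⟨hr1, by omega⟩, (cdiv_eq_iff hl hr1 hv.1).mpr ⟨ha, hb⟩⟩
    rw [h6, Nat.card_Icc]
    have hsub := Nat.sub_one_mul v lam
    have hle : lam ≤ v * lam := Nat.le_mul_of_pos_left lam hv.1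
    omega

/-- Every codeword of `E_{n,k}^λ` lies in `S_n^λ`. -/
theorem enc_mem_Snl (lam m k : ℕ) (hl : 0 < lam) (hm : 0 < m) (hk : 0 < k)
    (n : ℕ) (hn : n = m * lam) (hkn : k + lam ≤ n) (msg : Fin k → Bool) :
    memSnl n m lam (enc n k lam msg) :=
  enc_mem_Snl' lam m k hl hm hk n hn hkn msg
end

section
/- The encoding map E_{n,k}^λ is injective on {0,1}^k; consequently its image C_{n,k}^λ has cardinality 2^k. -/
open Finset

lemma cdiv_lt_cdiv {lam a b : ℕ} (hl : 0 < lam) (h : a + lam ≤ b) :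
    cdiv a lam < cdiv b lam := by
  unfold cdiv
  have h1 : (a + lam - 1) + lam ≤ b + lam - 1 := by omega
  calc (a + lam - 1) / lam < (a + lam - 1) / lam + 1 := Nat.lt_succ_self _
    _ = ((a + lam - 1) + lam) / lam := (Nat.add_div_right _ hl).symm
    _ ≤ (b + lam - 1) / lam := Nat.div_le_div_right h1

lemma ones_add_zeros_le {k : ℕ} (msg : Fin k → Bool) (i : ℕ) :
    ones msg i + zeros msg i ≤ i := by
  classical
  unfold ones zeros
  rw [← Finset.card_union_of_disjoint (by
    simp [Finset.disjoint_left]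
    intro a h1 h2 h3
    simp [h2] )]
  have hsub : ((univ.filter fun j : Fin k => j.val < i ∧ msg j = true) ∪
      (univ.filter fun j : Fin k => j.val < i ∧ msg j = false)) ⊆
      (univ.filter fun j : Fin k => j.val < i) := by
    intro a ha
    simp at ha ⊢
    tauto
  refine le_trans (Finset.card_le_card hsub) ?_
  calc (univ.filter fun j : Fin k => j.val < i).card
      ≤ (Finset.range i).card := by
        apply Finset.card_le_card_of_injOn Fin.val
        · intro a ha; simp at ha ⊢; exact ha
        · intro a _ b _ hab; exact Fin.val_injective hab
    _ = i := Finset.card_range i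

lemma ones_congr {k : ℕ} {msg1 msg2 : Fin k → Bool} {i : ℕ}
    (h : ∀ j : Fin k, j.val < i → msg1 j = msg2 j) :
    ones msg1 i = ones msg2 i := by
  unfold ones
  congr 1
  ext j
  simp only [Finset.mem_filter, Finset.mem_univ, true_and]
  constructor
  · rintro ⟨hj, hm⟩; exact ⟨hj, (h j hj) ▸ hm⟩
  · rintro ⟨hj, hm⟩; exact ⟨hj, (h j hj).symm ▸ hm⟩

lemma zeros_congr {k : ℕ} {msg1 msg2 : Fin k → Bool} {i : ℕ}
    (h : ∀ j : Fin k, j.val < i → msg1 j = msg2 j) :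
    zeros msg1 i = zeros msg2 i := by
  unfold zeros
  congr 1
  ext j
  simp only [Finset.mem_filter, Finset.mem_univ, true_and]
  constructor
  · rintro ⟨hj, hm⟩; exact ⟨hj, (h j hj) ▸ hm⟩
  · rintro ⟨hj, hm⟩; exact ⟨hj, (h j hj).symm ▸ hm⟩

/-- `E_{n,k}^λ` is injective, hence its image `C_{n,k}^λ` has `2^k` elements. -/
theorem enc_injective_card (lam m k : ℕ) (hl : 0 < lam) (hm : 0 < m) (hk : 0 < k)
    (n : ℕ) (hn : n = m * lam) (hkn : k + lam ≤ n) :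
    Function.Injective (enc n k lam) ∧
    ((univ : Finset (Fin k → Bool)).image (enc n k lam)).card = 2 ^ k := by
  have hinj : Function.Injective (enc n k lam) := by
    intro msg1 msg2 hEnc
    funext j
    -- strong induction on j.val
    suffices H : ∀ i : ℕ, ∀ hi : i < k, msg1 ⟨i, hi⟩ = msg2 ⟨i, hi⟩ by
      exact H j.val j.isLt
    intro i
    induction i using Nat.strong_induction_on with
    | _ i IH =>
      intro hi
      have hin : i < n := lt_of_lt_of_le hi (by omega)
      have heq := congrFun hEnc ⟨i, hin⟩
      simp only [enc] at heq
      rw [dif_pos hi, dif_pos hi] at heq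
      have hprev : ∀ j : Fin k, j.val < i → msg1 j = msg2 j := by
        intro j hj
        have := IH j.val hj j.isLt
        simpa using this
      have ho := ones_congr hprev
      have hz := zeros_congr hprev
      by_contra hne
      have hsum1 := ones_add_zeros_le msg1 i
      have key : ∀ (a b : Fin k → Bool), a ⟨i, hi⟩ = true → b ⟨i, hi⟩ = false →
          ones a i = ones b i → zeros a i = zeros b i →
          ones a i + zeros a i ≤ i →
          cdiv (n - ones a i) lam ≠ cdiv (1 + zeros b i) lam := by
        intro a b _ _ hoab hzab hab
        have hle : (1 + zeros b i) + lam ≤ n - ones a i := by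
          rw [← hzab]
          omega
        exact (Nat.ne_of_lt (cdiv_lt_cdiv hl hle)).symm
      rcases Bool.eq_false_or_eq_true (msg1 ⟨i, hi⟩) with h1 | h1 <;>
        rcases Bool.eq_false_or_eq_true (msg2 ⟨i, hi⟩) with h2 | h2 <;>
        simp only [h1, h2] at heq hne <;> simp at heq hne
      · exact key msg1 msg2 h1 h2 ho hz hsum1 heq
      · exact key msg2 msg1 h2 h1 ho.symm hz.symm
          (by rw [← ho, ← hz]; exact hsum1) heq.symm
  refine ⟨hinj, ?_⟩
  rw [Finset.card_image_of_injective _ hinj, Finset.card_univ]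
  simp [Fintype.card_fun]
end
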